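/- arXiv:2511.05010 — 2 statements merged into one kernel-verified Lean document; each statement's English description precedes it below -/
import Mathlib

section
/- Let A = ⊕_{n≥0} A^n and B = ⊕_{n≥0} B^n be unital differential graded algebras over a field k (with differentials of degree +1 squaring to zero and satisfying the graded Leibniz rule), and let φ: A → B be a morphism of unital dg algebras. Assume ker(d_A) ∩ A⁰ = k·1_A, H¹(A) = 0, H²(A) = 0, ker(d_B) ∩ B⁰ = k·1_B, and H¹(B) = 0. Then there exist dg subalgebras 𝒜 ⊆ A and ℬ ⊆ B such that: (1) 𝒜⁰ = k·1_A, 𝒜¹ = 0, 𝒜² = 0, ℬ⁰ = k·1_B, ℬ¹ = 0; (2) the inclusion maps 𝒜 ↪ A and ℬ ↪ B are quasi-isomorphisms (induce isomorphisms on cohomology in every degree); (3) φ(𝒜) ⊆ ℬ. -/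
/-!
Fix `m ≥ 1` and a complement `C` of `d(A^{m-1})` in `A^m`. The subspace
`k·1 ⊕ 0 ⊕ ⋯ ⊕ 0 ⊕ C ⊕ A^{m+1} ⊕ A^{m+2} ⊕ ⋯` is a dg subalgebra: a product of two elements of
positive degree, one of them of degree `≥ m`, has degree `> m`, and `d` kills `k·1`. When
`H⁰ = k` and `Hʲ = 0` for `0 < j < m`, its inclusion is a quasi-isomorphism: in degree `m` every
cocycle is `c + dz` with `c ∈ C`, and `C` meets the coboundaries only in `0`; in degree `m + 1`
a coboundary `dz` with `z = c + du` equals `dc`. Take `m = 3` for `A` and `m = 2` for `B`: the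
first subalgebra lives in degrees `0` and `≥ 3`, where the second contains `k·1` and all of `B`,
so `φ` maps one into the other.
-/

open DirectSum Submodule

namespace DirectSum

variable {ι R M : Type*} [DecidableEq ι] [Semiring R] [AddCommMonoid M] [Module R M]
  (ℳ : ι → Submodule R M) [Decomposition ℳ] {W : ι → Submodule R M}

theorem decompose_mem_of_mem_iSup (hW : ∀ i, W i ≤ ℳ i) {x : M} (hx : x ∈ ⨆ i, W i) (i : ι) :
    (decompose ℳ x i : M) ∈ W i := by
  refine iSup_induction W (motive := fun x => (decompose ℳ x i : M) ∈ W i) hx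
    (fun j y hy => ?_) (by simp) fun y z hy hz => ?_
  · obtain rfl | hji := eq_or_ne j i
    · rwa [decompose_of_mem_same ℳ (hW j hy)]
    · rw [decompose_of_mem_ne ℳ (hW j hy) hji]
      exact zero_mem _
  · rw [decompose_add, add_apply, coe_add]
    exact add_mem hy hz

theorem mem_iSup_iff_of_mem (hW : ∀ i, W i ≤ ℳ i) {x : M} {i : ι} (hx : x ∈ ℳ i) :
    x ∈ ⨆ j, W j ↔ x ∈ W i := by
  refine ⟨fun hxW => ?_, fun hxW => le_iSup W i hxW⟩
  simpa only [decompose_of_mem_same ℳ hx] using decompose_mem_of_mem_iSup ℳ hW hxW i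

end DirectSum

section Truncation

variable {k A : Type*} [CommSemiring k] [Semiring A] [Algebra k A]
  (𝒜 : ℕ → Submodule k A) {m : ℕ} {C : Submodule k A} {d : A →ₗ[k] A}

variable (m C) in
def truncationPiece (j : ℕ) : Submodule k A :=
  if j = 0 then 1 else if j < m then ⊥ else if j = m then C else 𝒜 j

variable (m C) in
def truncation : Submodule k A :=
  ⨆ j, truncationPiece 𝒜 m C j

theorem truncationPiece_zero : truncationPiece 𝒜 m C 0 = 1 :=
  if_pos rfl

theorem truncationPiece_eq_bot {j : ℕ} (hj0 : j ≠ 0) (hjm : j < m) :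
    truncationPiece 𝒜 m C j = ⊥ := by
  rw [truncationPiece, if_neg hj0, if_pos hjm]

theorem truncationPiece_self (hm : m ≠ 0) : truncationPiece 𝒜 m C m = C := by
  rw [truncationPiece, if_neg hm, if_neg (lt_irrefl m), if_pos rfl]

theorem truncationPiece_of_gt {j : ℕ} (hmj : m < j) : truncationPiece 𝒜 m C j = 𝒜 j := by
  rw [truncationPiece, if_neg (by omega), if_neg (by omega), if_neg (by omega)]

theorem one_mem_truncation : (1 : A) ∈ truncation 𝒜 m C :=
  le_iSup (truncationPiece 𝒜 m C) 0 (by rw [truncationPiece_zero]; exact one_le.mp le_rfl)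

theorem mem_truncation_of_gt {n : ℕ} (hmn : m < n) {x : A} (hx : x ∈ 𝒜 n) :
    x ∈ truncation 𝒜 m C :=
  le_iSup (truncationPiece 𝒜 m C) n (by rwa [truncationPiece_of_gt 𝒜 hmn])

theorem mem_truncation_of_mem (hm : m ≠ 0) {x : A} (hx : x ∈ C) : x ∈ truncation 𝒜 m C :=
  le_iSup (truncationPiece 𝒜 m C) m (by rwa [truncationPiece_self 𝒜 hm])

theorem exists_cocycle_mem_truncation_add (hd : ∀ x, d (d x) = 0)
    (hsup : map d (𝒜 (m - 1)) ⊔ C = 𝒜 m)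
    (hker0 : ∀ x ∈ 𝒜 0, d x = 0 → ∃ c : k, x = c • (1 : A))
    (hH : ∀ j, 0 < j → j < m → ∀ x ∈ 𝒜 j, d x = 0 → ∃ y ∈ 𝒜 (j - 1), x = d y)
    {n : ℕ} {x : A} (hx : x ∈ 𝒜 n) (hdx : d x = 0) :
    ∃ y z, y ∈ truncation 𝒜 m C ∧ y ∈ 𝒜 n ∧ d y = 0 ∧ z ∈ 𝒜 (n - 1) ∧ x = y + d z := by
  obtain rfl | hn0 := eq_or_ne n 0
  · obtain ⟨c, rfl⟩ := hker0 x hx hdx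
    exact ⟨c • 1, 0, smul_mem _ c (one_mem_truncation 𝒜), hx, hdx, zero_mem _, by simp⟩
  obtain hnm | rfl | hmn := lt_trichotomy n m
  · obtain ⟨z, hz, rfl⟩ := hH n (Nat.pos_of_ne_zero hn0) hnm x hx hdx
    exact ⟨0, z, zero_mem _, zero_mem _, map_zero d, hz, (zero_add _).symm⟩
  · rw [← hsup] at hx
    obtain ⟨_, ⟨z, hz, rfl⟩, c, hc, rfl⟩ := mem_sup.mp hx
    have hdc : d c = 0 := by
      rwa [map_add, hd z, zero_add] at hdx
    exact ⟨c, z, mem_truncation_of_mem 𝒜 hn0 hc, hsup ▸ mem_sup_right hc, hdc, hz, add_comm _ _⟩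
  · exact ⟨x, 0, mem_truncation_of_gt 𝒜 hmn hx, hx, hdx, zero_mem _, by simp⟩

variable [GradedAlgebra 𝒜]

theorem truncationPiece_le (hC : C ≤ 𝒜 m) (j : ℕ) : truncationPiece 𝒜 m C j ≤ 𝒜 j := by
  obtain rfl | hj0 := eq_or_ne j 0
  · rw [truncationPiece_zero, Submodule.one_le]
    exact SetLike.one_mem_graded 𝒜
  obtain hjm | rfl | hmj := lt_trichotomy j m
  · rw [truncationPiece_eq_bot 𝒜 hj0 hjm]
    exact bot_le
  · rwa [truncationPiece_self 𝒜 hj0]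
  · rw [truncationPiece_of_gt 𝒜 hmj]

theorem truncationPiece_mul_le (hC : C ≤ 𝒜 m) (i j : ℕ) :
    truncationPiece 𝒜 m C i * truncationPiece 𝒜 m C j ≤ truncationPiece 𝒜 m C (i + j) := by
  obtain rfl | hi0 := eq_or_ne i 0
  · rw [truncationPiece_zero, one_mul, zero_add]
  obtain rfl | hj0 := eq_or_ne j 0
  · rw [truncationPiece_zero, mul_one, add_zero]
  obtain hi | hi := lt_or_ge i m
  · rw [truncationPiece_eq_bot 𝒜 hi0 hi, bot_mul]
    exact bot_le
  rw [truncationPiece_of_gt 𝒜 (by omega : m < i + j)]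
  refine (mul_le_mul' (truncationPiece_le 𝒜 hC i) (truncationPiece_le 𝒜 hC j)).trans ?_
  exact mul_le.mpr fun a ha b hb => SetLike.mul_mem_graded ha hb

theorem mem_truncation_iff (hC : C ≤ 𝒜 m) {n : ℕ} {x : A} (hx : x ∈ 𝒜 n) :
    x ∈ truncation 𝒜 m C ↔ x ∈ truncationPiece 𝒜 m C n :=
  mem_iSup_iff_of_mem 𝒜 (truncationPiece_le 𝒜 hC) hx

theorem decompose_mem_truncation (hC : C ≤ 𝒜 m) {x : A} (hx : x ∈ truncation 𝒜 m C) (n : ℕ) :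
    (decompose 𝒜 x n : A) ∈ truncation 𝒜 m C :=
  le_iSup (truncationPiece 𝒜 m C) n (decompose_mem_of_mem_iSup 𝒜 (truncationPiece_le 𝒜 hC) hx n)

theorem truncation_mul_le (hC : C ≤ 𝒜 m) :
    truncation 𝒜 m C * truncation 𝒜 m C ≤ truncation 𝒜 m C := by
  simp only [truncation, iSup_mul, mul_iSup]
  exact iSup₂_le fun _ _ => (truncationPiece_mul_le 𝒜 hC _ _).trans (le_iSup _ _)

variable (m) in
def truncationSubalgebra (hC : C ≤ 𝒜 m) : Subalgebra k A :=
  (truncation 𝒜 m C).toSubalgebra (one_mem_truncation 𝒜)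
    fun _ _ hx hy => truncation_mul_le 𝒜 hC (mul_mem_mul hx hy)

theorem exists_eq_smul_one_of_mem_truncation (hC : C ≤ 𝒜 m) {x : A}
    (hxT : x ∈ truncation 𝒜 m C) (hx : x ∈ 𝒜 0) : ∃ c : k, x = c • (1 : A) := by
  rw [mem_truncation_iff 𝒜 hC hx, truncationPiece_zero, mem_one] at hxT
  obtain ⟨c, rfl⟩ := hxT
  exact ⟨c, Algebra.algebraMap_eq_smul_one c⟩

theorem eq_zero_of_mem_truncation (hC : C ≤ 𝒜 m) {n : ℕ} (hn0 : n ≠ 0) (hnm : n < m) {x : A}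
    (hxT : x ∈ truncation 𝒜 m C) (hx : x ∈ 𝒜 n) : x = 0 := by
  rwa [mem_truncation_iff 𝒜 hC hx, truncationPiece_eq_bot 𝒜 hn0 hnm, mem_bot] at hxT

theorem map_truncation_le {B : Type*} [Semiring B] [Algebra k B] (ℬ : ℕ → Submodule k B)
    [GradedAlgebra ℬ] {m' : ℕ} {C' : Submodule k B} (hm'm : m' < m) (hC : C ≤ 𝒜 m)
    (φ : A →ₐ[k] B) (hφ : ∀ (n : ℕ) (x : A), x ∈ 𝒜 n → φ x ∈ ℬ n) :
    map φ.toLinearMap (truncation 𝒜 m C) ≤ truncation ℬ m' C' := by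
  rw [truncation, Submodule.map_iSup]
  refine iSup_le fun j => le_trans ?_ (le_iSup (truncationPiece ℬ m' C') j)
  obtain rfl | hj0 := eq_or_ne j 0
  · rw [truncationPiece_zero, truncationPiece_zero, Submodule.map_one]
  obtain hjm | hmj := lt_or_ge j m
  · rw [truncationPiece_eq_bot 𝒜 hj0 hjm, Submodule.map_bot]
    exact bot_le
  rw [truncationPiece_of_gt ℬ (hm'm.trans_le hmj), map_le_iff_le_comap]
  exact (truncationPiece_le 𝒜 hC j).trans (hφ j)

theorem map_truncationPiece_le (hdeg : ∀ (n : ℕ) (x : A), x ∈ 𝒜 n → d x ∈ 𝒜 (n + 1))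
    (hd1 : d 1 = 0) (hC : C ≤ 𝒜 m) (j : ℕ) :
    map d (truncationPiece 𝒜 m C j) ≤ truncationPiece 𝒜 m C (j + 1) := by
  obtain rfl | hj0 := eq_or_ne j 0
  · rw [map_le_iff_le_comap]
    intro x hx
    rw [truncationPiece_zero, mem_one] at hx
    obtain ⟨c, rfl⟩ := hx
    rw [mem_comap, Algebra.algebraMap_eq_smul_one, map_smul, hd1, smul_zero]
    exact zero_mem _
  obtain hjm | hmj := lt_or_ge j m
  · rw [truncationPiece_eq_bot 𝒜 hj0 hjm, Submodule.map_bot]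
    exact bot_le
  rw [truncationPiece_of_gt 𝒜 (Nat.lt_succ_of_le hmj), map_le_iff_le_comap]
  exact (truncationPiece_le 𝒜 hC j).trans (hdeg j)

theorem truncation_le_comap (hdeg : ∀ (n : ℕ) (x : A), x ∈ 𝒜 n → d x ∈ 𝒜 (n + 1))
    (hd1 : d 1 = 0) (hC : C ≤ 𝒜 m) : truncation 𝒜 m C ≤ comap d (truncation 𝒜 m C) :=
  iSup_le fun j => map_le_iff_le_comap.mp
    ((map_truncationPiece_le 𝒜 hdeg hd1 hC j).trans (le_iSup _ (j + 1)))

theorem eq_zero_of_mem_truncation_of_le (hdeg : ∀ (n : ℕ) (x : A), x ∈ 𝒜 n → d x ∈ 𝒜 (n + 1))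
    (hC : C ≤ 𝒜 m) (hdisj : Disjoint (map d (𝒜 (m - 1))) C)
    {n : ℕ} (hnm : n ≤ m) {x z : A} (hxT : x ∈ truncation 𝒜 m C) (hx : x ∈ 𝒜 n)
    (hz : z ∈ 𝒜 (n - 1)) (hxz : x = d z) : x = 0 := by
  obtain rfl | hn0 := eq_or_ne n 0
  · by_contra hx0
    exact zero_ne_one (degree_eq_of_mem_mem 𝒜 hx (hxz ▸ hdeg 0 z hz) hx0)
  obtain hnm | rfl := hnm.lt_or_eq
  · exact eq_zero_of_mem_truncation 𝒜 hC hn0 hnm hxT hx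
  · rw [mem_truncation_iff 𝒜 hC hx, truncationPiece_self 𝒜 hn0] at hxT
    exact disjoint_def.mp hdisj x ⟨z, hz, hxz.symm⟩ hxT

theorem exists_mem_truncation_eq_map (hd : ∀ x, d (d x) = 0)
    (hdeg : ∀ (n : ℕ) (x : A), x ∈ 𝒜 n → d x ∈ 𝒜 (n + 1)) (hm : m ≠ 0)
    (hsup : map d (𝒜 (m - 1)) ⊔ C = 𝒜 m) (hdisj : Disjoint (map d (𝒜 (m - 1))) C)
    {n : ℕ} {x z : A} (hxT : x ∈ truncation 𝒜 m C) (hx : x ∈ 𝒜 n)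
    (hz : z ∈ 𝒜 (n - 1)) (hxz : x = d z) :
    ∃ w, w ∈ truncation 𝒜 m C ∧ w ∈ 𝒜 (n - 1) ∧ x = d w := by
  obtain hnm | hmn := le_or_gt n m
  · refine ⟨0, zero_mem _, zero_mem _, ?_⟩
    rw [map_zero]
    exact eq_zero_of_mem_truncation_of_le 𝒜 hdeg (hsup ▸ le_sup_right) hdisj hnm hxT hx hz hxz
  obtain rfl | hmn := (Nat.succ_le_of_lt hmn).eq_or_lt
  · rw [Nat.succ_sub_one, ← hsup] at hz
    obtain ⟨_, ⟨u, hu, rfl⟩, c, hc, rfl⟩ := mem_sup.mp hz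
    refine ⟨c, mem_truncation_of_mem 𝒜 hm hc, ?_, ?_⟩
    · rw [Nat.succ_sub_one, ← hsup]
      exact mem_sup_right hc
    · rw [hxz, map_add, hd u, zero_add]
  · exact ⟨z, mem_truncation_of_gt 𝒜 (by omega) hz, hz, hxz⟩

end Truncation

theorem map_one_eq_zero_of_leibniz {k A : Type*} [CommRing k] [Ring A] [Algebra k A]
    (𝒜 : ℕ → Submodule k A) [GradedAlgebra 𝒜] {d : A →ₗ[k] A}
    (hLeib : ∀ (m : ℕ) (x y : A), x ∈ 𝒜 m → d (x * y) = d x * y + ((-1 : k) ^ m) • (x * d y)) :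
    d 1 = 0 := by
  simpa using hLeib 0 1 1 (SetLike.one_mem_graded 𝒜)

theorem stmt4_general {k A B : Type} [Field k] [Ring A] [Algebra k A] [Ring B] [Algebra k B]
    (𝒜 : ℕ → Submodule k A) (ℬ : ℕ → Submodule k B)
    [GradedAlgebra 𝒜] [GradedAlgebra ℬ]
    (dA : A →ₗ[k] A) (dB : B →ₗ[k] B)
    (hdA2 : dA ∘ₗ dA = 0) (hdB2 : dB ∘ₗ dB = 0)
    (hdAdeg : ∀ (n : ℕ) (x : A), x ∈ 𝒜 n → dA x ∈ 𝒜 (n + 1))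
    (hdBdeg : ∀ (n : ℕ) (x : B), x ∈ ℬ n → dB x ∈ ℬ (n + 1))
    (hLeibA : ∀ (m : ℕ) (x y : A), x ∈ 𝒜 m →
      dA (x * y) = dA x * y + ((-1 : k) ^ m) • (x * dA y))
    (hLeibB : ∀ (m : ℕ) (x y : B), x ∈ ℬ m →
      dB (x * y) = dB x * y + ((-1 : k) ^ m) • (x * dB y))
    (φ : A →ₐ[k] B)
    (hφdeg : ∀ (n : ℕ) (x : A), x ∈ 𝒜 n → φ x ∈ ℬ n)
    -- `ker d_A ∩ A⁰ = k·1` and `ker d_B ∩ B⁰ = k·1`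
    (hker0A : ∀ x ∈ 𝒜 0, dA x = 0 → ∃ c : k, x = c • (1 : A))
    (hker0B : ∀ x ∈ ℬ 0, dB x = 0 → ∃ c : k, x = c • (1 : B))
    -- `H¹(A) = 0`, `H²(A) = 0`, `H¹(B) = 0`
    (hH1A : ∀ x ∈ 𝒜 1, dA x = 0 → ∃ y ∈ 𝒜 0, x = dA y)
    (hH2A : ∀ x ∈ 𝒜 2, dA x = 0 → ∃ y ∈ 𝒜 1, x = dA y)
    (hH1B : ∀ x ∈ ℬ 1, dB x = 0 → ∃ y ∈ ℬ 0, x = dB y) :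
    ∃ (SA : Subalgebra k A) (SB : Subalgebra k B),
      -- dg subalgebras: closed under the differential and graded
      (∀ x ∈ SA, dA x ∈ SA) ∧ (∀ x ∈ SB, dB x ∈ SB) ∧
      (∀ x ∈ SA, ∀ n : ℕ, ((DirectSum.decompose 𝒜 x n : ↥(𝒜 n)) : A) ∈ SA) ∧
      (∀ x ∈ SB, ∀ n : ℕ, ((DirectSum.decompose ℬ x n : ↥(ℬ n)) : B) ∈ SB) ∧
      -- (1) `𝒜⁰ = k·1`, `𝒜¹ = 0`, `𝒜² = 0`, `ℬ⁰ = k·1`, `ℬ¹ = 0`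
      (∀ x, x ∈ SA → x ∈ 𝒜 0 → ∃ c : k, x = c • (1 : A)) ∧
      (∀ x, x ∈ SA → x ∈ 𝒜 1 → x = 0) ∧
      (∀ x, x ∈ SA → x ∈ 𝒜 2 → x = 0) ∧
      (∀ x, x ∈ SB → x ∈ ℬ 0 → ∃ c : k, x = c • (1 : B)) ∧
      (∀ x, x ∈ SB → x ∈ ℬ 1 → x = 0) ∧
      -- (2) the inclusions are quasi-isomorphisms (in every degree `n`):
      -- surjectivity on cohomology
      (∀ (n : ℕ), ∀ x ∈ 𝒜 n, dA x = 0 →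
        ∃ y z, y ∈ SA ∧ y ∈ 𝒜 n ∧ dA y = 0 ∧ z ∈ 𝒜 (n - 1) ∧ x = y + dA z) ∧
      (∀ (n : ℕ), ∀ x ∈ ℬ n, dB x = 0 →
        ∃ y z, y ∈ SB ∧ y ∈ ℬ n ∧ dB y = 0 ∧ z ∈ ℬ (n - 1) ∧ x = y + dB z) ∧
      -- injectivity on cohomology
      (∀ (n : ℕ), ∀ x, x ∈ SA → x ∈ 𝒜 n → (∃ z ∈ 𝒜 (n - 1), x = dA z) →
        ∃ w, w ∈ SA ∧ w ∈ 𝒜 (n - 1) ∧ x = dA w) ∧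
      (∀ (n : ℕ), ∀ x, x ∈ SB → x ∈ ℬ n → (∃ z ∈ ℬ (n - 1), x = dB z) →
        ∃ w, w ∈ SB ∧ w ∈ ℬ (n - 1) ∧ x = dB w) ∧
      -- (3) `φ(𝒜) ⊆ ℬ`
      (∀ x ∈ SA, φ x ∈ SB) := by
  have hdA1 := map_one_eq_zero_of_leibniz 𝒜 hLeibA
  have hdB1 := map_one_eq_zero_of_leibniz ℬ hLeibB
  have hddA : ∀ x, dA (dA x) = 0 := LinearMap.congr_fun hdA2
  have hddB : ∀ x, dB (dB x) = 0 := LinearMap.congr_fun hdB2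
  obtain ⟨CA, hdisjA, hsupA⟩ := IsModularLattice.exists_disjoint_and_sup_eq
    (map_le_iff_le_comap.mpr (hdAdeg 2) : map dA (𝒜 (3 - 1)) ≤ 𝒜 3)
  obtain ⟨CB, hdisjB, hsupB⟩ := IsModularLattice.exists_disjoint_and_sup_eq
    (map_le_iff_le_comap.mpr (hdBdeg 1) : map dB (ℬ (2 - 1)) ≤ ℬ 2)
  have hCA : CA ≤ 𝒜 3 := hsupA ▸ le_sup_right
  have hCB : CB ≤ ℬ 2 := hsupB ▸ le_sup_right
  have hHA : ∀ j, 0 < j → j < 3 → ∀ x ∈ 𝒜 j, dA x = 0 → ∃ y ∈ 𝒜 (j - 1), x = dA y := by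
    intro j hj0 hj3
    interval_cases j
    exacts [hH1A, hH2A]
  have hHB : ∀ j, 0 < j → j < 2 → ∀ x ∈ ℬ j, dB x = 0 → ∃ y ∈ ℬ (j - 1), x = dB y := by
    intro j hj0 hj2
    interval_cases j
    exact hH1B
  refine ⟨truncationSubalgebra 𝒜 3 hCA, truncationSubalgebra ℬ 2 hCB,
    fun _ hx => truncation_le_comap 𝒜 hdAdeg hdA1 hCA hx,
    fun _ hx => truncation_le_comap ℬ hdBdeg hdB1 hCB hx,
    fun _ => decompose_mem_truncation 𝒜 hCA, fun _ => decompose_mem_truncation ℬ hCB,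
    fun _ => exists_eq_smul_one_of_mem_truncation 𝒜 hCA,
    fun _ => eq_zero_of_mem_truncation 𝒜 hCA one_ne_zero (by norm_num),
    fun _ => eq_zero_of_mem_truncation 𝒜 hCA two_ne_zero (by norm_num),
    fun _ => exists_eq_smul_one_of_mem_truncation ℬ hCB,
    fun _ => eq_zero_of_mem_truncation ℬ hCB one_ne_zero (by norm_num),
    fun _ _ => exists_cocycle_mem_truncation_add 𝒜 hddA hsupA hker0A hHA,
    fun _ _ => exists_cocycle_mem_truncation_add ℬ hddB hsupB hker0B hHB,
    fun _ _ hxT hx ⟨z, hz, hxz⟩ =>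
      exists_mem_truncation_eq_map 𝒜 hddA hdAdeg three_ne_zero hsupA hdisjA hxT hx hz hxz,
    fun _ _ hxT hx ⟨z, hz, hxz⟩ =>
      exists_mem_truncation_eq_map ℬ hddB hdBdeg two_ne_zero hsupB hdisjB hxT hx hz hxz,
    fun x hx => map_truncation_le 𝒜 ℬ (by norm_num) hCA φ hφdeg (mem_map_of_mem hx)⟩

/-- given unital dg algebras `A`, `B` (ℕ-graded, differentials of degree `+1`
squaring to zero and satisfying the graded Leibniz rule) over a field `k`, a morphism
`φ : A → B` of unital dg algebras, and the cohomological hypotheses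
`ker d_A ∩ A⁰ = k·1`, `H¹(A) = 0`, `H²(A) = 0`, `ker d_B ∩ B⁰ = k·1`, `H¹(B) = 0`,
there exist dg subalgebras `𝒜 ⊆ A`, `ℬ ⊆ B` (graded, unital, closed under the
differentials) with `𝒜⁰ = k·1`, `𝒜¹ = 𝒜² = 0`, `ℬ⁰ = k·1`, `ℬ¹ = 0`, whose inclusions
are quasi-isomorphisms, and with `φ(𝒜) ⊆ ℬ`. -/
theorem stmt4 {k A B : Type} [Field k] [Ring A] [Algebra k A] [Ring B] [Algebra k B]
    (𝒜 : ℕ → Submodule k A) (ℬ : ℕ → Submodule k B)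
    [GradedAlgebra 𝒜] [GradedAlgebra ℬ]
    (dA : A →ₗ[k] A) (dB : B →ₗ[k] B)
    (hdA2 : dA ∘ₗ dA = 0) (hdB2 : dB ∘ₗ dB = 0)
    (hdAdeg : ∀ (n : ℕ) (x : A), x ∈ 𝒜 n → dA x ∈ 𝒜 (n + 1))
    (hdBdeg : ∀ (n : ℕ) (x : B), x ∈ ℬ n → dB x ∈ ℬ (n + 1))
    (hLeibA : ∀ (m : ℕ) (x y : A), x ∈ 𝒜 m →
      dA (x * y) = dA x * y + ((-1 : k) ^ m) • (x * dA y))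
    (hLeibB : ∀ (m : ℕ) (x y : B), x ∈ ℬ m →
      dB (x * y) = dB x * y + ((-1 : k) ^ m) • (x * dB y))
    (φ : A →ₐ[k] B)
    (hφd : ∀ x, φ (dA x) = dB (φ x))
    (hφdeg : ∀ (n : ℕ) (x : A), x ∈ 𝒜 n → φ x ∈ ℬ n)
    -- `ker d_A ∩ A⁰ = k·1` and `ker d_B ∩ B⁰ = k·1`
    (hker0A : ∀ x ∈ 𝒜 0, dA x = 0 → ∃ c : k, x = c • (1 : A))
    (hker0B : ∀ x ∈ ℬ 0, dB x = 0 → ∃ c : k, x = c • (1 : B))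
    -- `H¹(A) = 0`, `H²(A) = 0`, `H¹(B) = 0`
    (hH1A : ∀ x ∈ 𝒜 1, dA x = 0 → ∃ y ∈ 𝒜 0, x = dA y)
    (hH2A : ∀ x ∈ 𝒜 2, dA x = 0 → ∃ y ∈ 𝒜 1, x = dA y)
    (hH1B : ∀ x ∈ ℬ 1, dB x = 0 → ∃ y ∈ ℬ 0, x = dB y) :
    ∃ (SA : Subalgebra k A) (SB : Subalgebra k B),
      -- dg subalgebras: closed under the differential and graded
      (∀ x ∈ SA, dA x ∈ SA) ∧ (∀ x ∈ SB, dB x ∈ SB) ∧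
      (∀ x ∈ SA, ∀ n : ℕ, ((DirectSum.decompose 𝒜 x n : ↥(𝒜 n)) : A) ∈ SA) ∧
      (∀ x ∈ SB, ∀ n : ℕ, ((DirectSum.decompose ℬ x n : ↥(ℬ n)) : B) ∈ SB) ∧
      -- (1) `𝒜⁰ = k·1`, `𝒜¹ = 0`, `𝒜² = 0`, `ℬ⁰ = k·1`, `ℬ¹ = 0`
      (∀ x, x ∈ SA → x ∈ 𝒜 0 → ∃ c : k, x = c • (1 : A)) ∧
      (∀ x, x ∈ SA → x ∈ 𝒜 1 → x = 0) ∧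
      (∀ x, x ∈ SA → x ∈ 𝒜 2 → x = 0) ∧
      (∀ x, x ∈ SB → x ∈ ℬ 0 → ∃ c : k, x = c • (1 : B)) ∧
      (∀ x, x ∈ SB → x ∈ ℬ 1 → x = 0) ∧
      -- (2) the inclusions are quasi-isomorphisms (in every degree `n`):
      -- surjectivity on cohomology
      (∀ (n : ℕ), ∀ x ∈ 𝒜 n, dA x = 0 →
        ∃ y z, y ∈ SA ∧ y ∈ 𝒜 n ∧ dA y = 0 ∧ z ∈ 𝒜 (n - 1) ∧ x = y + dA z) ∧
      (∀ (n : ℕ), ∀ x ∈ ℬ n, dB x = 0 →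
        ∃ y z, y ∈ SB ∧ y ∈ ℬ n ∧ dB y = 0 ∧ z ∈ ℬ (n - 1) ∧ x = y + dB z) ∧
      -- injectivity on cohomology
      (∀ (n : ℕ), ∀ x, x ∈ SA → x ∈ 𝒜 n → (∃ z ∈ 𝒜 (n - 1), x = dA z) →
        ∃ w, w ∈ SA ∧ w ∈ 𝒜 (n - 1) ∧ x = dA w) ∧
      (∀ (n : ℕ), ∀ x, x ∈ SB → x ∈ ℬ n → (∃ z ∈ ℬ (n - 1), x = dB z) →
        ∃ w, w ∈ SB ∧ w ∈ ℬ (n - 1) ∧ x = dB w) ∧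
      -- (3) `φ(𝒜) ⊆ ℬ`
      (∀ x ∈ SA, φ x ∈ SB) :=
  stmt4_general 𝒜 ℬ dA dB hdA2 hdB2 hdAdeg hdBdeg hLeibA hLeibB φ hφdeg hker0A hker0B hH1A hH2A hH1B
end

section
/- Fix ℓ ≥ 2 and 1 ≤ i < j ≤ ℓ, and let E_ℓ, I_ℓ, e₂(ℓ) = E_ℓ/I_ℓ, φ and the algebra homomorphism ρ̃_{ij}: E_ℓ → E_{ℓ−1} be as in the Arnold-algebra setup. Then: (a) there is a unique linear map δ̃_{ij}: E_ℓ → E_{ℓ−1} of degree −1 satisfying δ̃_{ij}(1) = 0, δ̃_{ij}(a_{mn}) = 1 if {m,n} = {i,j} and δ̃_{ij}(a_{mn}) = 0 otherwise (for 1 ≤ m < n ≤ ℓ), and the twisted graded Leibniz rule δ̃_{ij}(xy) = δ̃_{ij}(x)·ρ̃_{ij}(y) + (−1)^{p} ρ̃_{ij}(x)·δ̃_{ij}(y) for all homogeneous x of degree p and all y; and (b) δ̃_{ij}(I_ℓ) ⊆ I_{ℓ−1}, so δ̃_{ij} descends to a degree −1 linear map δ_{ij}: e₂(ℓ) → e₂(ℓ−1).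 -/
set_option maxHeartbeats 1600000

noncomputable section

/-- Index set for the generators `a_{mn}`, `m < n` (0-indexed). -/
abbrev PairIdx (ℓ : ℕ) := {p : Fin ℓ × Fin ℓ // p.1 < p.2}

/-- The exterior algebra `E_ℓ` over `ℝ` on the vector space with basis
`{a_{mn} : m < n}`, each generator in degree 1. -/
abbrev Egen (ℓ : ℕ) := ExteriorAlgebra ℝ (PairIdx ℓ →₀ ℝ)

/-- The generator `a_{mn}` for `m < n`. -/
def agen (ℓ : ℕ) (m n : Fin ℓ) (h : m < n) : Egen ℓ :=
  ExteriorAlgebra.ι ℝ (Finsupp.single ⟨(m, n), h⟩ 1)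

/-- The symmetrized generator: `a_{mn}` with the convention `a_{nm} = a_{mn}`. -/
def agenS (ℓ : ℕ) (m n : Fin ℓ) : Egen ℓ :=
  if h : m < n then agen ℓ m n h else if h' : n < m then agen ℓ n m h' else 0

/-- The Arnold elements. -/
def arnoldSet (ℓ : ℕ) : Set (Egen ℓ) :=
  {x | ∃ p q r : Fin ℓ, p ≠ q ∧ q ≠ r ∧ p ≠ r ∧
    x = agenS ℓ p q * agenS ℓ q r + agenS ℓ q r * agenS ℓ r p
      + agenS ℓ r p * agenS ℓ p q}

/-- The two-sided ideal `I_ℓ` generated by the Arnold elements, as a submodule. -/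
def arnoldIdeal (ℓ : ℕ) : Submodule ℝ (Egen ℓ) :=
  Submodule.span ℝ {z | ∃ x y w, w ∈ arnoldSet ℓ ∧ z = x * w * y}

/-- The degree-`p` homogeneous piece of the exterior algebra. -/
def egrade (ℓ : ℕ) (p : ℕ) : Submodule ℝ (Egen ℓ) :=
  LinearMap.range (ExteriorAlgebra.ι ℝ : (PairIdx ℓ →₀ ℝ) →ₗ[ℝ] Egen ℓ) ^ p

/-- The relabelling map collapsing `j` onto `i`. -/
def phiMap (ℓ i j : ℕ) (hij : i < j) (hj : j < ℓ) (n : Fin ℓ) : Fin (ℓ - 1) :=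
  ⟨if n.val < j then n.val else if n.val = j then i else n.val - 1, by
    have := n.isLt; split_ifs <;> omega⟩

/-- The defining property of the algebra homomorphism `ρ̃_{ij}`. -/
def IsRho (ℓ i j : ℕ) (hij : i < j) (hj : j < ℓ) (ρ : Egen ℓ →ₐ[ℝ] Egen (ℓ - 1)) :
    Prop :=
  ∀ (m n : Fin ℓ) (h : m < n),
    ρ (agen ℓ m n h) =
      if m.val = i ∧ n.val = j then 0
      else agenS (ℓ - 1) (phiMap ℓ i j hij hj m) (phiMap ℓ i j hij hj n)

/-- The defining property of `δ̃_{ij}`: degree `-1`, kills `1`, takes the value `1` on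
`a_{ij}` and `0` on the other generators, and satisfies the graded Leibniz rule twisted
by `ρ̃_{ij}`. -/
def IsDelta (ℓ i j : ℕ) (hij : i < j) (hj : j < ℓ)
    (ρ : Egen ℓ →ₐ[ℝ] Egen (ℓ - 1)) (δ : Egen ℓ →ₗ[ℝ] Egen (ℓ - 1)) : Prop :=
  (∀ p : ℕ, ∀ x ∈ egrade ℓ p, δ x ∈ egrade (ℓ - 1) (p - 1)) ∧
  δ 1 = 0 ∧
  (∀ (m n : Fin ℓ) (h : m < n),
    δ (agen ℓ m n h) = if m.val = i ∧ n.val = j then 1 else 0) ∧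
  (∀ p : ℕ, ∀ x ∈ egrade ℓ p, ∀ y,
    δ (x * y) = δ x * ρ y + ((-1 : ℝ) ^ p) • (ρ x * δ y))

namespace Stmt15Aux

open ExteriorAlgebra

lemma egrade_def (ℓ p : ℕ) :
    egrade ℓ p = LinearMap.range (ι ℝ : (PairIdx ℓ →₀ ℝ) →ₗ[ℝ] Egen ℓ) ^ p := rfl

lemma agenS_comm (ℓ : ℕ) (m n : Fin ℓ) : agenS ℓ m n = agenS ℓ n m := by
  unfold agenS
  rcases lt_trichotomy m n with h | h | h
  · simp only [dif_pos h, dif_neg (asymm h)]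
  · subst h; rfl
  · simp only [dif_pos h, dif_neg (asymm h)]

lemma agenS_sq (ℓ : ℕ) (m n : Fin ℓ) : agenS ℓ m n * agenS ℓ m n = 0 := by
  unfold agenS
  split_ifs <;> simp [agen, ExteriorAlgebra.ι_sq_zero]

lemma agenS_mem (ℓ : ℕ) (m n : Fin ℓ) :
    agenS ℓ m n ∈ LinearMap.range (ι ℝ : (PairIdx ℓ →₀ ℝ) →ₗ[ℝ] Egen ℓ) := by
  unfold agenS
  split_ifs with h h'
  · exact ⟨Finsupp.single ⟨(m, n), h⟩ 1, rfl⟩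
  · exact ⟨Finsupp.single ⟨(n, m), h'⟩ 1, rfl⟩
  · exact zero_mem _

lemma agenS_mem_egrade1 (ℓ : ℕ) (m n : Fin ℓ) : agenS ℓ m n ∈ egrade ℓ 1 := by
  rw [egrade_def, pow_one]; exact agenS_mem ℓ m n

lemma arnold_mem_egrade2 (ℓ : ℕ) {w : Egen ℓ} (hw : w ∈ arnoldSet ℓ) :
    w ∈ egrade ℓ 2 := by
  obtain ⟨p, q, r, _, _, _, rfl⟩ := hw
  rw [egrade_def, pow_two]
  exact add_mem (add_mem (Submodule.mul_mem_mul (agenS_mem ℓ p q) (agenS_mem ℓ q r))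
    (Submodule.mul_mem_mul (agenS_mem ℓ q r) (agenS_mem ℓ r p)))
    (Submodule.mul_mem_mul (agenS_mem ℓ r p) (agenS_mem ℓ p q))

/-- membership of Arnold generators in the ideal -/
lemma arnold_subset_ideal (ℓ : ℕ) {w : Egen ℓ} (hw : w ∈ arnoldSet ℓ) :
    w ∈ arnoldIdeal ℓ :=
  Submodule.subset_span ⟨1, 1, w, hw, by rw [one_mul, mul_one]⟩

lemma ideal_mul_left (ℓ : ℕ) {x : Egen ℓ} (hx : x ∈ arnoldIdeal ℓ) (a : Egen ℓ) :
    a * x ∈ arnoldIdeal ℓ := by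
  induction hx using Submodule.span_induction with
  | mem z hz =>
    obtain ⟨u, v, w, hw, rfl⟩ := hz
    exact Submodule.subset_span ⟨a * u, v, w, hw, by simp [mul_assoc]⟩
  | zero => rw [mul_zero]; exact zero_mem _
  | add y z _ _ hy hz => rw [mul_add]; exact add_mem hy hz
  | smul c y _ hy => rw [mul_smul_comm]; exact Submodule.smul_mem _ _ hy

lemma ideal_mul_right (ℓ : ℕ) {x : Egen ℓ} (hx : x ∈ arnoldIdeal ℓ) (a : Egen ℓ) :
    x * a ∈ arnoldIdeal ℓ := by
  induction hx using Submodule.span_induction with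
  | mem z hz =>
    obtain ⟨u, v, w, hw, rfl⟩ := hz
    exact Submodule.subset_span ⟨u, v * a, w, hw, by simp [mul_assoc]⟩
  | zero => rw [zero_mul]; exact zero_mem _
  | add y z _ _ hy hz => rw [add_mul]; exact add_mem hy hz
  | smul c y _ hy => rw [smul_mul_assoc]; exact Submodule.smul_mem _ _ hy

/-- involute acts by `(-1)^p` on `egrade p`. -/
lemma involute_egrade (ℓ : ℕ) : ∀ (p : ℕ) (x : Egen ℓ), x ∈ egrade ℓ p →
    CliffordAlgebra.involute x = ((-1 : ℝ) ^ p) • x := by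
  intro p x hx
  rw [egrade_def] at hx
  induction hx using Submodule.pow_induction_on_left' with
  | algebraMap r => simp
  | add x y n hx hy ihx ihy => rw [map_add, ihx, ihy, smul_add]
  | mem_mul m hm n x hx ih =>
    obtain ⟨v, rfl⟩ := hm
    rw [map_mul, CliffordAlgebra.involute_ι, ih]
    rw [neg_mul, mul_smul_comm, pow_succ]
    rw [mul_smul, neg_one_smul, smul_neg]


section Construction

variable (ℓ i j : ℕ) (hij : i < j) (hj : j < ℓ)

/-- The distinguished index `(i,j)`. -/
def idxIJ : PairIdx ℓ := ⟨(⟨i, hij.trans hj⟩, ⟨j, hj⟩), hij⟩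

variable (ρ : Egen ℓ →ₐ[ℝ] Egen (ℓ - 1))

/-- Componentwise description of the matrix-valued linear map. -/
def fcomp : Fin 2 → Fin 2 → ((PairIdx ℓ →₀ ℝ) →ₗ[ℝ] Egen (ℓ - 1)) :=
  ![![-(ρ.toLinearMap ∘ₗ ι ℝ),
      (Algebra.linearMap ℝ (Egen (ℓ - 1))) ∘ₗ Finsupp.lapply (idxIJ ℓ i j hij hj)],
    ![0, ρ.toLinearMap ∘ₗ ι ℝ]]

/-- The linear map into `2×2` matrices whose lift computes `δ̃`. -/
def fmat : (PairIdx ℓ →₀ ℝ) →ₗ[ℝ] Matrix (Fin 2) (Fin 2) (Egen (ℓ - 1)) :=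
  LinearMap.pi fun a => LinearMap.pi fun b => fcomp ℓ i j hij hj ρ a b

lemma fmat_apply (v : PairIdx ℓ →₀ ℝ) :
    fmat ℓ i j hij hj ρ v =
      !![-(ρ (ι ℝ v)), algebraMap ℝ (Egen (ℓ - 1)) (v (idxIJ ℓ i j hij hj));
         0, ρ (ι ℝ v)] := by
  ext a b
  fin_cases a <;> fin_cases b <;> rfl

lemma fmat_sq (v : PairIdx ℓ →₀ ℝ) :
    fmat ℓ i j hij hj ρ v * fmat ℓ i j hij hj ρ v = 0 := by
  rw [fmat_apply, Matrix.mul_fin_two]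
  have h1 : ρ (ι ℝ v) * ρ (ι ℝ v) = 0 := by
    rw [← map_mul, ExteriorAlgebra.ι_sq_zero, map_zero]
  ext a b
  fin_cases a <;> fin_cases b <;>
    simp [neg_mul_neg, h1, Algebra.commutes, neg_mul, mul_neg]

/-- The lifted algebra homomorphism. -/
def Psi : Egen ℓ →ₐ[ℝ] Matrix (Fin 2) (Fin 2) (Egen (ℓ - 1)) :=
  ExteriorAlgebra.lift ℝ ⟨fmat ℓ i j hij hj ρ, fmat_sq ℓ i j hij hj ρ⟩

lemma Psi_ι (v : PairIdx ℓ →₀ ℝ) :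
    Psi ℓ i j hij hj ρ (ι ℝ v) = fmat ℓ i j hij hj ρ v := by
  simp [Psi]

lemma Psi_entries (x : Egen ℓ) :
    Psi ℓ i j hij hj ρ x 1 0 = 0 ∧ Psi ℓ i j hij hj ρ x 1 1 = ρ x ∧
      Psi ℓ i j hij hj ρ x 0 0 = ρ (CliffordAlgebra.involute x) := by
  induction x using ExteriorAlgebra.induction with
  | algebraMap r =>
    rw [AlgHom.commutes]
    refine ⟨?_, ?_, ?_⟩ <;>
      simp [Matrix.algebraMap_matrix_apply, AlgHom.commutes]
  | ι v =>
    rw [Psi_ι, fmat_apply]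
    refine ⟨?_, ?_, ?_⟩ <;>
      simp [fmat, CliffordAlgebra.involute_ι, map_neg]
  | mul a b ha hb =>
    rw [map_mul]
    refine ⟨?_, ?_, ?_⟩ <;>
      simp [Matrix.mul_apply, Fin.sum_univ_two, ha.1, ha.2.1, ha.2.2,
        hb.1, hb.2.1, hb.2.2, map_mul]
  | add a b ha hb =>
    rw [map_add]
    exact ⟨by simp [Matrix.add_apply, ha.1, hb.1],
      by simp [Matrix.add_apply, ha.2.1, hb.2.1, map_add],
      by simp [Matrix.add_apply, ha.2.2, hb.2.2, map_add]⟩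

/-- The candidate for `δ̃`. -/
def deltaMap : Egen ℓ →ₗ[ℝ] Egen (ℓ - 1) where
  toFun x := Psi ℓ i j hij hj ρ x 0 1
  map_add' x y := by rw [map_add]; rfl
  map_smul' c x := by rw [map_smul]; rfl

lemma deltaMap_apply (x : Egen ℓ) :
    deltaMap ℓ i j hij hj ρ x = Psi ℓ i j hij hj ρ x 0 1 := rfl

lemma deltaMap_mul (x y : Egen ℓ) :
    deltaMap ℓ i j hij hj ρ (x * y) =
      ρ (CliffordAlgebra.involute x) * deltaMap ℓ i j hij hj ρ y +
        deltaMap ℓ i j hij hj ρ x * ρ y := by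
  simp only [deltaMap_apply, map_mul, Matrix.mul_apply, Fin.sum_univ_two]
  rw [(Psi_entries ℓ i j hij hj ρ x).2.2, (Psi_entries ℓ i j hij hj ρ y).2.1]

end Construction


section Props

variable (ℓ i j : ℕ) (hij : i < j) (hj : j < ℓ)
variable (ρ : Egen ℓ →ₐ[ℝ] Egen (ℓ - 1))

lemma idx_eq_iff (m n : Fin ℓ) (h : m < n) :
    (⟨(m, n), h⟩ : PairIdx ℓ) = idxIJ ℓ i j hij hj ↔ (m.val = i ∧ n.val = j) := by
  simp [idxIJ, Subtype.ext_iff, Prod.ext_iff, Fin.ext_iff]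

lemma rho_iota_mem (hρ : IsRho ℓ i j hij hj ρ) (v : PairIdx ℓ →₀ ℝ) :
    ρ (ι ℝ v) ∈
      LinearMap.range (ι ℝ : (PairIdx (ℓ - 1) →₀ ℝ) →ₗ[ℝ] Egen (ℓ - 1)) := by
  induction v using Finsupp.induction_linear with
  | zero => rw [map_zero, map_zero]; exact zero_mem _
  | add f g hf hg => rw [map_add, map_add]; exact add_mem hf hg
  | single a b =>
    obtain ⟨⟨m, n⟩, h⟩ := a
    have hb : Finsupp.single (⟨(m, n), h⟩ : PairIdx ℓ) b
        = b • Finsupp.single (⟨(m, n), h⟩ : PairIdx ℓ) 1 := by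
      rw [Finsupp.smul_single, smul_eq_mul, mul_one]
    rw [hb, map_smul, map_smul]
    refine Submodule.smul_mem _ _ ?_
    rw [show (ι ℝ) (Finsupp.single (⟨(m, n), h⟩ : PairIdx ℓ) 1) = agen ℓ m n h from rfl,
      hρ m n h]
    split_ifs
    · exact zero_mem _
    · exact agenS_mem _ _ _

lemma rho_grade (hρ : IsRho ℓ i j hij hj ρ) : ∀ (p : ℕ) (x : Egen ℓ), x ∈ egrade ℓ p → ρ x ∈ egrade (ℓ - 1) p := by
  intro p x hx
  rw [egrade_def] at hx
  rw [egrade_def]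
  induction hx using Submodule.pow_induction_on_left' with
  | algebraMap r => rw [AlgHom.commutes]; exact Submodule.algebraMap_mem r
  | add x y n hx hy ihx ihy => rw [map_add]; exact add_mem ihx ihy
  | mem_mul m hm n x hx ih =>
    obtain ⟨v, rfl⟩ := hm
    rw [map_mul, pow_succ']
    exact Submodule.mul_mem_mul (rho_iota_mem ℓ i j hij hj ρ hρ v) ih

lemma psi01_grade (hρ : IsRho ℓ i j hij hj ρ) : ∀ (p : ℕ) (x : Egen ℓ), x ∈ egrade ℓ p →
    Psi ℓ i j hij hj ρ x 0 1 ∈ egrade (ℓ - 1) (p - 1) ∧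
      (p = 0 → Psi ℓ i j hij hj ρ x 0 1 = 0) := by
  intro p x hx
  rw [egrade_def] at hx
  induction hx using Submodule.pow_induction_on_left' with
  | algebraMap r =>
    have h0 : Psi ℓ i j hij hj ρ ((algebraMap ℝ (Egen ℓ)) r) 0 1 = 0 := by
      rw [AlgHom.commutes]
      simp [Matrix.algebraMap_matrix_apply]
    exact ⟨h0 ▸ zero_mem _, fun _ => h0⟩
  | add x y n hx hy ihx ihy =>
    have hsum : Psi ℓ i j hij hj ρ (x + y) 0 1
        = Psi ℓ i j hij hj ρ x 0 1 + Psi ℓ i j hij hj ρ y 0 1 := by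
      rw [map_add]; rfl
    rw [hsum]
    exact ⟨add_mem ihx.1 ihy.1, fun h => by rw [ihx.2 h, ihy.2 h, add_zero]⟩
  | mem_mul m hm n x hx ih =>
    obtain ⟨v, rfl⟩ := hm
    have hmul : Psi ℓ i j hij hj ρ (ι ℝ v * x) 0 1
        = -(ρ (ι ℝ v)) * Psi ℓ i j hij hj ρ x 0 1
          + algebraMap ℝ (Egen (ℓ - 1)) (v (idxIJ ℓ i j hij hj)) * ρ x := by
      rw [map_mul]
      simp [Matrix.mul_apply, Fin.sum_univ_two, Psi_ι, fmat_apply,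
        (Psi_entries ℓ i j hij hj ρ x).2.1]
    rw [hmul]
    have hx' : x ∈ egrade ℓ n := hx
    have hterm2 : algebraMap ℝ (Egen (ℓ - 1)) (v (idxIJ ℓ i j hij hj)) * ρ x
        ∈ egrade (ℓ - 1) n := by
      rw [← Algebra.smul_def]
      exact Submodule.smul_mem _ _ (rho_grade ℓ i j hij hj ρ hρ n x hx')
    refine ⟨?_, fun h => absurd h (Nat.succ_ne_zero n)⟩
    have hterm1 : -(ρ (ι ℝ v)) * Psi ℓ i j hij hj ρ x 0 1 ∈ egrade (ℓ - 1) n := by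
      cases n with
      | zero => rw [ih.2 rfl, mul_zero]; exact zero_mem _
      | succ k =>
        have : ρ (ι ℝ v) * Psi ℓ i j hij hj ρ x 0 1 ∈ egrade (ℓ - 1) (k + 1) := by
          rw [egrade_def, pow_succ']
          exact Submodule.mul_mem_mul (rho_iota_mem ℓ i j hij hj ρ hρ v)
            (by simpa [egrade_def] using ih.1)
        rw [neg_mul]
        exact neg_mem this
    simpa using add_mem hterm1 hterm2

lemma isDelta_deltaMap (hρ : IsRho ℓ i j hij hj ρ) : IsDelta ℓ i j hij hj ρ (deltaMap ℓ i j hij hj ρ) := by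
  refine ⟨?_, ?_, ?_, ?_⟩
  · intro p x hx
    exact (psi01_grade ℓ i j hij hj ρ hρ p x hx).1
  · rw [deltaMap_apply, map_one]
    exact Matrix.one_apply_ne (by decide)
  · intro m n h
    rw [deltaMap_apply,
      show agen ℓ m n h = ι ℝ (Finsupp.single (⟨(m, n), h⟩ : PairIdx ℓ) 1) from rfl,
      Psi_ι, fmat_apply]
    have : (!![-(ρ (ι ℝ (Finsupp.single (⟨(m, n), h⟩ : PairIdx ℓ) 1))),
        algebraMap ℝ (Egen (ℓ - 1))
          ((Finsupp.single (⟨(m, n), h⟩ : PairIdx ℓ) 1) (idxIJ ℓ i j hij hj));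
        0, ρ (ι ℝ (Finsupp.single (⟨(m, n), h⟩ : PairIdx ℓ) 1))]) 0 1
        = algebraMap ℝ (Egen (ℓ - 1))
            ((Finsupp.single (⟨(m, n), h⟩ : PairIdx ℓ) 1) (idxIJ ℓ i j hij hj)) := by
      simp
    rw [this, Finsupp.single_apply]
    by_cases hc : m.val = i ∧ n.val = j
    · rw [if_pos ((idx_eq_iff ℓ i j hij hj m n h).mpr hc), if_pos hc, map_one]
    · rw [if_neg (fun he => hc ((idx_eq_iff ℓ i j hij hj m n h).mp he)), if_neg hc, map_zero]
  · intro p x hx y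
    rw [deltaMap_mul, involute_egrade ℓ p x hx, Algebra.smul_def, map_mul,
      AlgHom.commutes, ← Algebra.smul_def, smul_mul_assoc, add_comm]

lemma isDelta_iota (δ : Egen ℓ →ₗ[ℝ] Egen (ℓ - 1)) (hδ : IsDelta ℓ i j hij hj ρ δ)
    (v : PairIdx ℓ →₀ ℝ) :
    δ (ι ℝ v) = algebraMap ℝ (Egen (ℓ - 1)) (v (idxIJ ℓ i j hij hj)) := by
  induction v using Finsupp.induction_linear with
  | zero => rw [map_zero, map_zero, Finsupp.zero_apply, map_zero]
  | add f g hf hg => rw [map_add, map_add, Finsupp.add_apply, map_add, hf, hg]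
  | single a b =>
    obtain ⟨⟨m, n⟩, h⟩ := a
    have hb : Finsupp.single (⟨(m, n), h⟩ : PairIdx ℓ) b
        = b • Finsupp.single (⟨(m, n), h⟩ : PairIdx ℓ) 1 := by
      rw [Finsupp.smul_single, smul_eq_mul, mul_one]
    rw [Finsupp.single_apply, hb, map_smul, map_smul,
      show (ι ℝ) (Finsupp.single (⟨(m, n), h⟩ : PairIdx ℓ) 1) = agen ℓ m n h from rfl,
      hδ.2.2.1 m n h]
    by_cases hc : m.val = i ∧ n.val = j
    · rw [if_pos hc, if_pos ((idx_eq_iff ℓ i j hij hj m n h).mpr hc),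
        Algebra.algebraMap_eq_smul_one]
    · rw [if_neg hc, if_neg (fun he => hc ((idx_eq_iff ℓ i j hij hj m n h).mp he)),
        smul_zero, map_zero]

lemma isDelta_unique (δ₁ δ₂ : Egen ℓ →ₗ[ℝ] Egen (ℓ - 1))
    (h₁ : IsDelta ℓ i j hij hj ρ δ₁) (h₂ : IsDelta ℓ i j hij hj ρ δ₂) : δ₁ = δ₂ := by
  have halg : ∀ (δ : Egen ℓ →ₗ[ℝ] Egen (ℓ - 1)), IsDelta ℓ i j hij hj ρ δ →
      ∀ r : ℝ, δ (algebraMap ℝ (Egen ℓ) r) = 0 := by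
    intro δ hδ r
    rw [Algebra.algebraMap_eq_smul_one, map_smul, hδ.2.1, smul_zero]
  have hgrade : ∀ (n : ℕ) (x : Egen ℓ), x ∈ egrade ℓ n → δ₁ x = δ₂ x := by
    intro n x hx
    rw [egrade_def] at hx
    induction hx using Submodule.pow_induction_on_left' with
    | algebraMap r => rw [halg δ₁ h₁, halg δ₂ h₂]
    | add x y n hx hy ihx ihy => rw [map_add, map_add, ihx, ihy]
    | mem_mul m hm n x hx ih =>
      obtain ⟨v, rfl⟩ := hm
      have h1m : ι ℝ v ∈ egrade ℓ 1 := by rw [egrade_def, pow_one]; exact ⟨v, rfl⟩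
      rw [h₁.2.2.2 1 _ h1m x, h₂.2.2.2 1 _ h1m x,
        isDelta_iota ℓ i j hij hj ρ δ₁ h₁ v, isDelta_iota ℓ i j hij hj ρ δ₂ h₂ v, ih]
  apply LinearMap.ext
  intro x
  refine DirectSum.Decomposition.inductionOn
    (fun n : ℕ => ⋀[ℝ]^n (PairIdx ℓ →₀ ℝ)) (motive := fun y => δ₁ y = δ₂ y)
    (show δ₁ 0 = δ₂ 0 by rw [map_zero, map_zero]) (fun {n} m => hgrade n m.1 m.2)
    (fun a b ha hb => show δ₁ (a + b) = δ₂ (a + b) by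
      rw [map_add, map_add]
      rw [show δ₁ a = δ₂ a from ha, show δ₁ b = δ₂ b from hb]) x

end Props


section Arnold

variable (ℓ i j : ℕ) (hij : i < j) (hj : j < ℓ)
variable (ρ : Egen ℓ →ₐ[ℝ] Egen (ℓ - 1))

lemma delta_agenS (δ : Egen ℓ →ₗ[ℝ] Egen (ℓ - 1)) (hδ : IsDelta ℓ i j hij hj ρ δ)
    (p q : Fin ℓ) :
    δ (agenS ℓ p q) =
      if (p.val = i ∧ q.val = j) ∨ (q.val = i ∧ p.val = j) then 1 else 0 := by
  unfold agenS
  rcases lt_trichotomy p q with h | h | h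
  · rw [dif_pos h, hδ.2.2.1 p q h]
    have hv : p.val < q.val := h
    have hiff : (p.val = i ∧ q.val = j) ↔
        ((p.val = i ∧ q.val = j) ∨ (q.val = i ∧ p.val = j)) :=
      ⟨Or.inl, fun hc => hc.resolve_right (by rintro ⟨h1, h2⟩; omega)⟩
    rw [if_congr hiff rfl rfl]
  · subst h
    rw [dif_neg (lt_irrefl p), dif_neg (lt_irrefl p), map_zero]
    rw [if_neg]
    rintro (⟨h1, h2⟩ | ⟨h1, h2⟩) <;> omega
  · have hv : q.val < p.val := h
    rw [dif_neg (asymm h), dif_pos h, hδ.2.2.1 q p h]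
    have hiff : (q.val = i ∧ p.val = j) ↔
        ((p.val = i ∧ q.val = j) ∨ (q.val = i ∧ p.val = j)) :=
      ⟨Or.inr, fun hc => hc.resolve_left (by rintro ⟨h1, h2⟩; omega)⟩
    rw [if_congr hiff rfl rfl]

lemma rho_agenS (hρ : IsRho ℓ i j hij hj ρ) (p q : Fin ℓ) (hpq : p ≠ q) :
    ρ (agenS ℓ p q) =
      if (p.val = i ∧ q.val = j) ∨ (q.val = i ∧ p.val = j) then 0
      else agenS (ℓ - 1) (phiMap ℓ i j hij hj p) (phiMap ℓ i j hij hj q) := by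
  unfold agenS
  rcases lt_trichotomy p q with h | h | h
  · rw [dif_pos h, hρ p q h]
    have hv : p.val < q.val := h
    have hiff : (p.val = i ∧ q.val = j) ↔
        ((p.val = i ∧ q.val = j) ∨ (q.val = i ∧ p.val = j)) :=
      ⟨Or.inl, fun hc => hc.resolve_right (by rintro ⟨h1, h2⟩; omega)⟩
    rw [if_congr hiff rfl rfl]
    rfl
  · exact absurd h hpq
  · have hv : q.val < p.val := h
    rw [dif_neg (asymm h), dif_pos h, hρ q p h]
    have hiff : (q.val = i ∧ p.val = j) ↔
        ((p.val = i ∧ q.val = j) ∨ (q.val = i ∧ p.val = j)) :=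
      ⟨Or.inr, fun hc => hc.resolve_left (by rintro ⟨h1, h2⟩; omega)⟩
    rw [if_congr hiff rfl rfl,
      agenS_comm (ℓ - 1) (phiMap ℓ i j hij hj q) (phiMap ℓ i j hij hj p)]
    rfl

lemma phi_eq_of_pair (p q : Fin ℓ)
    (hc : (p.val = i ∧ q.val = j) ∨ (q.val = i ∧ p.val = j)) :
    phiMap ℓ i j hij hj p = phiMap ℓ i j hij hj q := by
  apply Fin.ext
  simp only [phiMap]
  rcases hc with ⟨h1, h2⟩ | ⟨h1, h2⟩ <;> split_ifs <;> omega

lemma phi_ne (p q : Fin ℓ) (hpq : p ≠ q)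
    (hc : ¬((p.val = i ∧ q.val = j) ∨ (q.val = i ∧ p.val = j))) :
    phiMap ℓ i j hij hj p ≠ phiMap ℓ i j hij hj q := by
  intro he
  have hv : p.val ≠ q.val := fun hh => hpq (Fin.ext hh)
  have hvv := congrArg Fin.val he
  simp only [phiMap] at hvv
  push_neg at hc
  have hp := p.isLt
  have hq := q.isLt
  split_ifs at hvv <;> omega

lemma delta_arnold (δ : Egen ℓ →ₗ[ℝ] Egen (ℓ - 1)) (hδ : IsDelta ℓ i j hij hj ρ δ)
    (hρ : IsRho ℓ i j hij hj ρ) {w : Egen ℓ} (hw : w ∈ arnoldSet ℓ) : δ w = 0 := by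
  obtain ⟨p, q, r, hpq, hqr, hpr, rfl⟩ := hw
  have L : ∀ a b c d : Fin ℓ, δ (agenS ℓ a b * agenS ℓ c d)
      = δ (agenS ℓ a b) * ρ (agenS ℓ c d) - ρ (agenS ℓ a b) * δ (agenS ℓ c d) := by
    intro a b c d
    rw [hδ.2.2.2 1 _ (agenS_mem_egrade1 ℓ a b) _, pow_one, neg_one_smul,
      ← sub_eq_add_neg]
  have hvpq : p.val ≠ q.val := fun hh => hpq (Fin.ext hh)
  have hvqr : q.val ≠ r.val := fun hh => hqr (Fin.ext hh)
  have hvpr : p.val ≠ r.val := fun hh => hpr (Fin.ext hh)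
  rw [map_add, map_add, L, L, L,
    delta_agenS ℓ i j hij hj ρ δ hδ p q, delta_agenS ℓ i j hij hj ρ δ hδ q r,
    delta_agenS ℓ i j hij hj ρ δ hδ r p,
    rho_agenS ℓ i j hij hj ρ hρ p q hpq, rho_agenS ℓ i j hij hj ρ hρ q r hqr,
    rho_agenS ℓ i j hij hj ρ hρ r p (Ne.symm hpr)]
  by_cases h1 : (p.val = i ∧ q.val = j) ∨ (q.val = i ∧ p.val = j)
  · have h2 : ¬((q.val = i ∧ r.val = j) ∨ (r.val = i ∧ q.val = j)) := by
      rcases h1 with ⟨a1, a2⟩ | ⟨a1, a2⟩ <;> (rintro (⟨b1, b2⟩ | ⟨b1, b2⟩) <;> omega)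
    have h3 : ¬((r.val = i ∧ p.val = j) ∨ (p.val = i ∧ r.val = j)) := by
      rcases h1 with ⟨a1, a2⟩ | ⟨a1, a2⟩ <;> (rintro (⟨b1, b2⟩ | ⟨b1, b2⟩) <;> omega)
    rw [if_pos h1, if_pos h1, if_neg h2, if_neg h2, if_neg h3, if_neg h3]
    rw [phi_eq_of_pair ℓ i j hij hj p q h1,
      agenS_comm (ℓ - 1) (phiMap ℓ i j hij hj r) (phiMap ℓ i j hij hj q)]
    simp
  · by_cases h2 : (q.val = i ∧ r.val = j) ∨ (r.val = i ∧ q.val = j)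
    · have h3 : ¬((r.val = i ∧ p.val = j) ∨ (p.val = i ∧ r.val = j)) := by
        rcases h2 with ⟨a1, a2⟩ | ⟨a1, a2⟩ <;> (rintro (⟨b1, b2⟩ | ⟨b1, b2⟩) <;> omega)
      rw [if_neg h1, if_neg h1, if_pos h2, if_pos h2, if_neg h3, if_neg h3]
      rw [← phi_eq_of_pair ℓ i j hij hj q r h2,
        agenS_comm (ℓ - 1) (phiMap ℓ i j hij hj q) (phiMap ℓ i j hij hj p)]
      simp
    · by_cases h3 : (r.val = i ∧ p.val = j) ∨ (p.val = i ∧ r.val = j)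
      · rw [if_neg h1, if_neg h1, if_neg h2, if_neg h2, if_pos h3, if_pos h3]
        rw [phi_eq_of_pair ℓ i j hij hj r p h3,
          agenS_comm (ℓ - 1) (phiMap ℓ i j hij hj q) (phiMap ℓ i j hij hj p)]
        simp
      · rw [if_neg h1, if_neg h1, if_neg h2, if_neg h2, if_neg h3, if_neg h3]
        simp

lemma rho_arnold (hρ : IsRho ℓ i j hij hj ρ) {w : Egen ℓ} (hw : w ∈ arnoldSet ℓ) :
    ρ w ∈ arnoldIdeal (ℓ - 1) := by
  obtain ⟨p, q, r, hpq, hqr, hpr, rfl⟩ := hw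
  have hvpq : p.val ≠ q.val := fun hh => hpq (Fin.ext hh)
  have hvqr : q.val ≠ r.val := fun hh => hqr (Fin.ext hh)
  have hvpr : p.val ≠ r.val := fun hh => hpr (Fin.ext hh)
  rw [map_add, map_add, map_mul, map_mul, map_mul,
    rho_agenS ℓ i j hij hj ρ hρ p q hpq, rho_agenS ℓ i j hij hj ρ hρ q r hqr,
    rho_agenS ℓ i j hij hj ρ hρ r p (Ne.symm hpr)]
  by_cases h1 : (p.val = i ∧ q.val = j) ∨ (q.val = i ∧ p.val = j)
  · have h2 : ¬((q.val = i ∧ r.val = j) ∨ (r.val = i ∧ q.val = j)) := by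
      rcases h1 with ⟨a1, a2⟩ | ⟨a1, a2⟩ <;> (rintro (⟨b1, b2⟩ | ⟨b1, b2⟩) <;> omega)
    have h3 : ¬((r.val = i ∧ p.val = j) ∨ (p.val = i ∧ r.val = j)) := by
      rcases h1 with ⟨a1, a2⟩ | ⟨a1, a2⟩ <;> (rintro (⟨b1, b2⟩ | ⟨b1, b2⟩) <;> omega)
    rw [if_pos h1, if_neg h2, if_neg h3]
    rw [phi_eq_of_pair ℓ i j hij hj p q h1,
      agenS_comm (ℓ - 1) (phiMap ℓ i j hij hj r) (phiMap ℓ i j hij hj q)]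
    rw [zero_mul, mul_zero, zero_add, add_zero, agenS_sq]
    exact zero_mem _
  · by_cases h2 : (q.val = i ∧ r.val = j) ∨ (r.val = i ∧ q.val = j)
    · have h3 : ¬((r.val = i ∧ p.val = j) ∨ (p.val = i ∧ r.val = j)) := by
        rcases h2 with ⟨a1, a2⟩ | ⟨a1, a2⟩ <;> (rintro (⟨b1, b2⟩ | ⟨b1, b2⟩) <;> omega)
      rw [if_neg h1, if_pos h2, if_neg h3]
      rw [← phi_eq_of_pair ℓ i j hij hj q r h2,
        agenS_comm (ℓ - 1) (phiMap ℓ i j hij hj q) (phiMap ℓ i j hij hj p)]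
      simp only [mul_zero, zero_mul, zero_add, add_zero]
      rw [agenS_sq]
      exact zero_mem _
    · by_cases h3 : (r.val = i ∧ p.val = j) ∨ (p.val = i ∧ r.val = j)
      · rw [if_neg h1, if_neg h2, if_pos h3]
        rw [phi_eq_of_pair ℓ i j hij hj r p h3,
          agenS_comm (ℓ - 1) (phiMap ℓ i j hij hj q) (phiMap ℓ i j hij hj p)]
        rw [mul_zero, zero_mul, add_zero, add_zero, agenS_sq]
        exact zero_mem _
      · rw [if_neg h1, if_neg h2, if_neg h3]
        refine arnold_subset_ideal (ℓ - 1)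
          ⟨phiMap ℓ i j hij hj p, phiMap ℓ i j hij hj q, phiMap ℓ i j hij hj r,
            phi_ne ℓ i j hij hj p q hpq h1, phi_ne ℓ i j hij hj q r hqr h2,
            ?_, rfl⟩
        exact fun he => (phi_ne ℓ i j hij hj r p (Ne.symm hpr) h3) he.symm

lemma delta_ideal (δ : Egen ℓ →ₗ[ℝ] Egen (ℓ - 1)) (hδ : IsDelta ℓ i j hij hj ρ δ)
    (hρ : IsRho ℓ i j hij hj ρ) :
    (arnoldIdeal ℓ).map δ ≤ arnoldIdeal (ℓ - 1) := by
  rw [arnoldIdeal, Submodule.map_span, Submodule.span_le]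
  rintro _ ⟨z, ⟨x, y, w, hw, rfl⟩, rfl⟩
  show δ (x * w * y) ∈ arnoldIdeal (ℓ - 1)
  have hρw : ρ w ∈ arnoldIdeal (ℓ - 1) := rho_arnold ℓ i j hij hj ρ hρ hw
  have hwy : δ (w * y) ∈ arnoldIdeal (ℓ - 1) := by
    rw [hδ.2.2.2 2 w (arnold_mem_egrade2 ℓ hw) y,
      delta_arnold ℓ i j hij hj ρ δ hδ hρ hw, zero_mul, zero_add,
      show ((-1 : ℝ) ^ 2) = 1 by norm_num, one_smul]
    exact ideal_mul_right _ hρw (δ y)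
  have hρwy : ρ (w * y) ∈ arnoldIdeal (ℓ - 1) := by
    rw [map_mul]
    exact ideal_mul_right _ hρw (ρ y)
  have key : ∀ x : Egen ℓ, δ (x * (w * y)) ∈ arnoldIdeal (ℓ - 1) := by
    intro x
    refine DirectSum.Decomposition.inductionOn
      (fun n : ℕ => ⋀[ℝ]^n (PairIdx ℓ →₀ ℝ))
      (motive := fun x => δ (x * (w * y)) ∈ arnoldIdeal (ℓ - 1)) ?_ ?_ ?_ x
    · show δ (0 * (w * y)) ∈ arnoldIdeal (ℓ - 1)
      rw [zero_mul, map_zero]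
      exact zero_mem _
    · intro n m
      show δ (m.1 * (w * y)) ∈ arnoldIdeal (ℓ - 1)
      rw [hδ.2.2.2 n m.1 m.2 (w * y)]
      refine add_mem ?_ (Submodule.smul_mem _ _ (ideal_mul_left _ hwy (ρ m.1)))
      exact ideal_mul_left _ hρwy (δ m.1)
    · intro a b ha hb
      show δ ((a + b) * (w * y)) ∈ arnoldIdeal (ℓ - 1)
      rw [add_mul, map_add]
      exact add_mem ha hb
  rw [mul_assoc]
  exact key x

end Arnold

end Stmt15Aux

/-- given the collapse homomorphism `ρ̃_{ij}`, (a) there is a unique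
degree `-1` linear map `δ̃_{ij} : E_ℓ → E_{ℓ-1}` with `δ̃(1) = 0`, `δ̃(a_{ij}) = 1`,
`δ̃(a_{mn}) = 0` otherwise, satisfying the `ρ̃_{ij}`-twisted graded Leibniz rule; and
(b) any such map sends the Arnold ideal `I_ℓ` into `I_{ℓ-1}`, hence descends to a
degree `-1` linear map `δ_{ij} : e₂(ℓ) → e₂(ℓ-1)`. -/
theorem stmt15 (ℓ i j : ℕ) (hl : 2 ≤ ℓ) (hij : i < j) (hj : j < ℓ)
    (ρ : Egen ℓ →ₐ[ℝ] Egen (ℓ - 1)) (hρ : IsRho ℓ i j hij hj ρ) :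
    (∃! δ : Egen ℓ →ₗ[ℝ] Egen (ℓ - 1), IsDelta ℓ i j hij hj ρ δ) ∧
    (∀ δ : Egen ℓ →ₗ[ℝ] Egen (ℓ - 1), IsDelta ℓ i j hij hj ρ δ →
      (arnoldIdeal ℓ).map δ ≤ arnoldIdeal (ℓ - 1)) := by

  constructor
  · exact ⟨Stmt15Aux.deltaMap ℓ i j hij hj ρ,
      Stmt15Aux.isDelta_deltaMap ℓ i j hij hj ρ hρ,
      fun δ' h' => Stmt15Aux.isDelta_unique ℓ i j hij hj ρ δ'
        (Stmt15Aux.deltaMap ℓ i j hij hj ρ) h'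
        (Stmt15Aux.isDelta_deltaMap ℓ i j hij hj ρ hρ)⟩
  · intro δ hδ
    exact Stmt15Aux.delta_ideal ℓ i j hij hj ρ δ hδ hρ

end
end
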